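/- arXiv:1007.1185 — 2 statements merged into one kernel-verified Lean document; each statement's English description precedes it below -/
import Mathlib

section
/- Let 0<α<1, 1<p<1/α, q=p/(1-αp), θ>0, and let w be a weight on [0,1]. Let φ(u) = [ (u−q)/(1−α(u−q)) + p ]^{1−(u−q)α} and ψ(u) = φ(u^θ). Then there exist positive constants c₁, c₂ such that for every measurable f:[0,1]→ℝ, c₁‖f‖_{L^{q),θ(1+αq)}_w([0,1])} ≤ ‖f‖_{L^{q),ψ}_w([0,1])} ≤ c₂‖f‖_{L^{q),θ(1+αq)}_w([0,1])}. -/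
open MeasureTheory Set
open scoped ENNReal

/-- Weighted grand Lebesgue norm on `[0,1]`:
`‖f‖_{L^{q),θ}_w} = sup_{0<ε<q-1} (ε^θ ∫₀¹ |f|^{q-ε} w)^{1/(q-ε)}`. -/
noncomputable def grandNormW (q θ : ℝ) (w f : ℝ → ℝ) : ℝ≥0∞ :=
  ⨆ ε ∈ Set.Ioo (0 : ℝ) (q - 1),
    (ENNReal.ofReal (ε ^ θ) *
      ∫⁻ t in Set.Icc (0 : ℝ) 1, ENNReal.ofReal (|f t| ^ (q - ε) * w t)) ^ (1 / (q - ε))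

/-- Weighted grand Lebesgue norm on `[0,1]` associated with a function `ψ`:
`‖f‖_{L^{q),ψ}_w} = sup_{0<ε<q-1} (ψ(ε) ∫₀¹ |f|^{q-ε} w)^{1/(q-ε)}`. -/
noncomputable def grandNormPhiW (q : ℝ) (ψ : ℝ → ℝ) (w f : ℝ → ℝ) : ℝ≥0∞ :=
  ⨆ ε ∈ Set.Ioo (0 : ℝ) (q - 1),
    (ENNReal.ofReal (ψ ε) *
      ∫⁻ t in Set.Icc (0 : ℝ) 1, ENNReal.ofReal (|f t| ^ (q - ε) * w t)) ^ (1 / (q - ε))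

section GrandNormAux

private lemma aux_rpow_le_max {x : ℝ} {r : ℝ} (hr0 : 0 ≤ r) (hr1 : r ≤ 1) :
    (ENNReal.ofReal x) ^ r ≤ ENNReal.ofReal (max 1 x) := by
  rcases le_total x 1 with h | h
  · have h1 : ENNReal.ofReal x ≤ 1 := by
      simpa using ENNReal.ofReal_le_ofReal h
    calc (ENNReal.ofReal x) ^ r ≤ 1 := ENNReal.rpow_le_one h1 hr0
      _ ≤ ENNReal.ofReal (max 1 x) := by
          simpa using ENNReal.ofReal_le_ofReal (le_max_left 1 x)
  · have h1 : (1 : ℝ≥0∞) ≤ ENNReal.ofReal x := by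
      simpa using ENNReal.ofReal_le_ofReal h
    calc (ENNReal.ofReal x) ^ r ≤ (ENNReal.ofReal x) ^ (1:ℝ) :=
          ENNReal.rpow_le_rpow_of_exponent_le h1 hr1
      _ = ENNReal.ofReal x := ENNReal.rpow_one _
      _ ≤ ENNReal.ofReal (max 1 x) := ENNReal.ofReal_le_ofReal (le_max_right 1 x)

private lemma aux_ofReal_rpow_cancel {x r : ℝ} (hx : 0 < x) (hr : 0 < r) :
    ENNReal.ofReal x = (ENNReal.ofReal (x ^ r)) ^ (1 / r) := by
  rw [ENNReal.ofReal_rpow_of_pos (Real.rpow_pos_of_pos hx r), ← Real.rpow_mul hx.le,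
    mul_one_div, div_self (ne_of_gt hr), Real.rpow_one]

private lemma aux_extract {x : ℝ} (hx : 0 < x) {r : ℝ} (hr : 0 ≤ r) (X : ℝ≥0∞) :
    X ^ r ≤ ENNReal.ofReal (x ^ (-r)) * (ENNReal.ofReal x * X) ^ r := by
  rw [ENNReal.mul_rpow_of_nonneg _ _ hr, ← mul_assoc, ENNReal.ofReal_rpow_of_pos hx,
    ← ENNReal.ofReal_mul (Real.rpow_nonneg hx.le _), ← Real.rpow_add hx, neg_add_cancel,
    Real.rpow_zero, ENNReal.ofReal_one, one_mul]

private lemma aux_coeff_le {x y : ℝ} (hxy : x ≤ y) {r : ℝ} (hr : 0 ≤ r) (X : ℝ≥0∞) :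
    (ENNReal.ofReal x * X) ^ r ≤ (ENNReal.ofReal y * X) ^ r :=
  ENNReal.rpow_le_rpow (mul_le_mul_left (ENNReal.ofReal_le_ofReal hxy) X) hr

variable {α p q θ : ℝ}

private lemma aux_basic (hα0 : 0 < α) (hp : 1 < p) (hpα : p < 1 / α)
    (hq : q = p / (1 - α * p)) :
    0 < 1 - α * p ∧ q * (1 - α * p) = p ∧ (1 + α * q) * (1 - α * p) = 1 ∧ 1 < q := by
  have hap : α * p < 1 := by
    have := (lt_div_iff₀ hα0).mp hpα
    linarith [this]
  have hc : 0 < 1 - α * p := by linarith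
  have hqid : q * (1 - α * p) = p := by rw [hq]; field_simp; exact div_self (by rw [mul_comm]; exact hc.ne')
  have hκ : (1 + α * q) * (1 - α * p) = 1 := by nlinarith [hqid]
  have hq1 : 1 < q := by nlinarith [hqid, mul_pos hα0 (by linarith : (0:ℝ) < p)]
  exact ⟨hc, hqid, hκ, hq1⟩

private lemma aux_base_eq (hα0 : 0 < α) (hp : 1 < p) (hpα : p < 1 / α)
    (hq : q = p / (1 - α * p)) {u : ℝ} (hu : 1 - (u - q) * α ≠ 0) :
    (u - q) / (1 - α * (u - q)) + p = u * (1 - α * p) / (1 - (u - q) * α) := by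
  obtain ⟨hc, hqid, hκ, hq1⟩ := aux_basic hα0 hp hpα hq
  have hden : 1 - α * (u - q) = 1 - (u - q) * α := by ring
  rw [hden]
  field_simp
  nlinarith [hqid]

/-- Small-`ε` two-sided bound for `ψ`. -/
private lemma psi_small (hα0 : 0 < α) (hp : 1 < p) (hpα : p < 1 / α)
    (hq : q = p / (1 - α * p)) (hθ : 0 < θ) {ε : ℝ} (hε0 : 0 < ε) (hε1 : ε ≤ 1) :
    ((1 - α * p) ^ 2) ^ (1 + α * q) * ε ^ (θ * (1 + α * q)) ≤
      ((ε ^ θ - q) / (1 - α * (ε ^ θ - q)) + p) ^ (1 - (ε ^ θ - q) * α) ∧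
    ((ε ^ θ - q) / (1 - α * (ε ^ θ - q)) + p) ^ (1 - (ε ^ θ - q) * α) ≤
      Real.exp α * ε ^ (θ * (1 + α * q)) := by
  obtain ⟨hc, hqid, hκc, hq1⟩ := aux_basic hα0 hp hpα hq
  set c : ℝ := 1 - α * p with hcdef
  set κ : ℝ := 1 + α * q with hκdef
  set u : ℝ := ε ^ θ with hudef
  have hκ1 : 1 < κ := by
    have : 0 < α * q := mul_pos hα0 (by linarith)
    simp only [hκdef]; linarith
  have hu0 : 0 < u := Real.rpow_pos_of_pos hε0 θ
  have hu1 : u ≤ 1 := Real.rpow_le_one hε0.le hε1 hθ.le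
  set E : ℝ := 1 - (u - q) * α with hEdef
  have hE1 : 1 ≤ E := by simp only [hEdef]; nlinarith
  have hEκ : E ≤ κ := by simp only [hEdef, hκdef]; nlinarith
  have hE0 : 0 < E := lt_of_lt_of_le one_pos hE1
  clear_value c κ u E
  have hEne : 1 - (u - q) * α ≠ 0 := by rw [← hEdef]; exact ne_of_gt hE0
  have hb : (u - q) / (1 - α * (u - q)) + p = u * c / E := by
    rw [hcdef, hEdef]; exact aux_base_eq hα0 hp hpα (hcdef ▸ hq) hEne
  have hc1 : c < 1 := by
    have : 0 < α * p := mul_pos hα0 (by linarith)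
    simp only [hcdef]; linarith
  have hb0 : 0 < u * c / E := by positivity
  have hbub : u * c / E ≤ u * c := div_le_self (by positivity) hE1
  have hb1 : u * c / E ≤ 1 := le_trans hbub (by nlinarith)
  have hκ0 : (0:ℝ) < κ := by linarith
  have hblb : u * (c * c) ≤ u * c / E := by
    have h1 : u * c / κ ≤ u * c / E := by gcongr
    have h2 : u * c / κ = u * (c * c) := by
      rw [div_eq_iff (ne_of_gt hκ0)]
      linear_combination (-(u * c)) * hκc
    linarith
  have low1 : (u * c / E) ^ κ ≤ (u * c / E) ^ E := Real.rpow_le_rpow_of_exponent_ge hb0 hb1 hEκ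
  have low2 : (u * (c * c)) ^ κ ≤ (u * c / E) ^ κ := Real.rpow_le_rpow (by positivity) hblb hκ0.le
  have low3 : (u * (c * c)) ^ κ = (c ^ 2) ^ κ * u ^ κ := by
    rw [show u * (c * c) = c ^ 2 * u by ring, Real.mul_rpow (by positivity) hu0.le]
  have low4 : u ^ κ = ε ^ (θ * κ) := by
    rw [hudef]; exact (Real.rpow_mul hε0.le θ κ).symm
  have up1 : (u * c / E) ^ E ≤ (u * c) ^ E := Real.rpow_le_rpow hb0.le hbub (by linarith)
  have up2 : (u * c) ^ E ≤ u ^ E :=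
    Real.rpow_le_rpow (by positivity) (by nlinarith) (by linarith)
  have hEsplit : E = κ + -(α * u) := by simp only [hEdef, hκdef]; ring
  have up3 : u ^ E = u ^ κ * u ^ (-(α * u)) := by rw [hEsplit, Real.rpow_add hu0]
  have hlog : -Real.log u ≤ u⁻¹ - 1 := by
    have := Real.log_le_sub_one_of_pos (inv_pos.2 hu0)
    rwa [Real.log_inv] at this
  have up4 : u ^ (-(α * u)) ≤ Real.exp α := by
    rw [Real.rpow_def_of_pos hu0]
    apply Real.exp_le_exp.mpr
    have h5 : u * (-Real.log u) ≤ 1 - u := by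
      have h6 := mul_le_mul_of_nonneg_left hlog hu0.le
      have hui : u * (u⁻¹ - 1) = 1 - u := by field_simp
      linarith
    have h7 : Real.log u * -(α * u) = α * (u * (-Real.log u)) := by ring
    rw [h7]
    calc α * (u * (-Real.log u)) ≤ α * (1 - u) := mul_le_mul_of_nonneg_left h5 hα0.le
      _ ≤ α * 1 := mul_le_mul_of_nonneg_left (by linarith) hα0.le
      _ = α := mul_one α
  have up5 : u ^ κ * u ^ (-(α * u)) ≤ Real.exp α * u ^ κ := by
    rw [mul_comm (Real.exp α)]
    exact mul_le_mul_of_nonneg_left up4 (Real.rpow_nonneg hu0.le κ)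
  constructor
  · rw [hb]
    calc (c ^ 2) ^ κ * ε ^ (θ * κ) = (u * (c * c)) ^ κ := by rw [low3, low4]
      _ ≤ (u * c / E) ^ κ := low2
      _ ≤ (u * c / E) ^ E := low1
  · rw [hb]
    calc (u * c / E) ^ E ≤ (u * c) ^ E := up1
      _ ≤ u ^ E := up2
      _ = u ^ κ * u ^ (-(α * u)) := up3
      _ ≤ Real.exp α * u ^ κ := up5
      _ = Real.exp α * ε ^ (θ * κ) := by rw [low4]

private lemma aux_xlogx' {x E : ℝ} (hx : x ≠ 0) (hE : |x| ≤ E) :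
    abs (x * Real.log |x|) ≤ 1 + E ^ 2 := by
  have hx0 : 0 < |x| := abs_pos.2 hx
  rw [abs_mul]
  rcases le_total |x| 1 with h | h
  · have hlog : Real.log |x| ≤ 0 := Real.log_nonpos hx0.le h
    have h2 : Real.log |x|⁻¹ ≤ |x|⁻¹ - 1 := Real.log_le_sub_one_of_pos (inv_pos.2 hx0)
    rw [Real.log_inv] at h2
    have h3 : abs (Real.log |x|) = -Real.log |x| := abs_of_nonpos hlog
    have h4 : |x| * (-Real.log |x|) ≤ |x| * (|x|⁻¹ - 1) :=
      mul_le_mul_of_nonneg_left (by linarith) hx0.le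
    have h5 : |x| * (|x|⁻¹ - 1) = 1 - |x| := by field_simp
    nlinarith [sq_nonneg E]
  · have hlog : 0 ≤ Real.log |x| := Real.log_nonneg h
    have h2 : Real.log |x| ≤ |x| - 1 := Real.log_le_sub_one_of_pos hx0
    have h3 : abs (Real.log |x|) = Real.log |x| := abs_of_nonneg hlog
    nlinarith [hx0]

set_option maxHeartbeats 1000000 in
private lemma psi_large (hα0 : 0 < α) (hp : 1 < p) (hpα : p < 1 / α)
    (hq : q = p / (1 - α * p)) (hθ : 0 < θ) {δ ε : ℝ}
    (hδ0 : 0 < δ) (hδε : δ ≤ ε) (hεq : ε ≤ q - 1) :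
    ((ε ^ θ - q) / (1 - α * (ε ^ θ - q)) + p) ^ (1 - (ε ^ θ - q) * α) ≤
      Real.exp ((1 + α * q + α * (q - 1) ^ θ) *
          (|Real.log (δ ^ θ * (1 - α * p))| + |Real.log ((q - 1) ^ θ * (1 - α * p))|) +
        (1 + (1 + α * q + α * (q - 1) ^ θ) ^ 2)) := by
  obtain ⟨hc, hqid, hκc, hq1⟩ := aux_basic hα0 hp hpα hq
  have hε0 : 0 < ε := lt_of_lt_of_le hδ0 hδε
  set c : ℝ := 1 - α * p with hcdef
  set κ : ℝ := 1 + α * q with hκdef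
  set u : ℝ := ε ^ θ with hudef
  set U : ℝ := (q - 1) ^ θ with hUdef
  set Ebar : ℝ := κ + α * U with hEbardef
  set L : ℝ := |Real.log (δ ^ θ * c)| + |Real.log (U * c)| with hLdef
  have hκ1 : 1 < κ := by
    have : 0 < α * q := mul_pos hα0 (by linarith)
    simp only [hκdef]; linarith
  have hu0 : 0 < u := Real.rpow_pos_of_pos hε0 θ
  have hδθ0 : (0:ℝ) < δ ^ θ := Real.rpow_pos_of_pos hδ0 θ
  have hulo : δ ^ θ ≤ u := Real.rpow_le_rpow hδ0.le hδε hθ.le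
  have huhi : u ≤ U := Real.rpow_le_rpow hε0.le hεq hθ.le
  have hU0 : 0 < U := lt_of_lt_of_le hu0 huhi
  set E : ℝ := 1 - (u - q) * α with hEdef
  have hE : E = κ - α * u := by simp only [hEdef, hκdef]; ring
  have hEbar0 : 0 < Ebar := by
    simp only [hEbardef]; nlinarith [mul_pos hα0 hU0]
  have hEabs : |E| ≤ Ebar := by
    rw [abs_le]
    constructor
    · rw [hE]; simp only [hEbardef]; nlinarith [mul_le_mul_of_nonneg_left huhi hα0.le]
    · rw [hE]; simp only [hEbardef]; nlinarith [mul_pos hα0 hu0, mul_pos hα0 hU0]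
  have hL0 : 0 ≤ L := by simp only [hLdef]; positivity
  have hargs : 0 ≤ Ebar * L + (1 + Ebar ^ 2) := by positivity
  clear_value c κ u U Ebar L E
  by_cases hE0 : E = 0
  · have hden0 : 1 - α * (u - q) = 0 := by linear_combination hEdef.symm.trans hE0
    rw [hden0, div_zero, hE0, Real.rpow_zero]
    exact Real.one_le_exp hargs
  · have hEne : 1 - (u - q) * α ≠ 0 := by rw [← hEdef]; exact hE0
    have hbase : (u - q) / (1 - α * (u - q)) + p = u * c / E := by
      rw [hcdef, hEdef]; exact aux_base_eq hα0 hp hpα (hcdef ▸ hq) hEne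
    rw [hbase]
    have huc0 : 0 < u * c := mul_pos hu0 hc
    have hEa0 : 0 < |E| := abs_pos.2 hE0
    have hxlog : abs (E * Real.log |E|) ≤ 1 + Ebar ^ 2 := aux_xlogx' hE0 hEabs
    have hL1 : |Real.log (u * c)| ≤ L := by
      have hlo : Real.log (δ ^ θ * c) ≤ Real.log (u * c) :=
        Real.log_le_log (by positivity) (mul_le_mul_of_nonneg_right hulo hc.le)
      have hhi : Real.log (u * c) ≤ Real.log (U * c) :=
        Real.log_le_log huc0 (mul_le_mul_of_nonneg_right huhi hc.le)
      rw [abs_le]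
      constructor
      · have := neg_abs_le (Real.log (δ ^ θ * c))
        simp only [hLdef]
        have h2 := le_abs_self (Real.log (U * c))
        have h3 := abs_nonneg (Real.log (U * c))
        have h4 := abs_nonneg (Real.log (δ ^ θ * c))
        linarith
      · have h2 := le_abs_self (Real.log (U * c))
        have h4 := abs_nonneg (Real.log (δ ^ θ * c))
        simp only [hLdef]
        linarith
    calc (u * c / E) ^ E ≤ |(u * c / E) ^ E| := le_abs_self _
      _ ≤ |u * c / E| ^ E := Real.abs_rpow_le_abs_rpow _ _
      _ = (u * c / |E|) ^ E := by rw [abs_div, abs_of_pos huc0]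
      _ = Real.exp (Real.log (u * c / |E|) * E) := by
          rw [Real.rpow_def_of_pos (div_pos huc0 hEa0)]
      _ ≤ Real.exp (Ebar * L + (1 + Ebar ^ 2)) := by
          apply Real.exp_le_exp.mpr
          rw [Real.log_div (ne_of_gt huc0) (ne_of_gt hEa0)]
          have h1 : Real.log (u * c) * E ≤ L * Ebar := by
            calc Real.log (u * c) * E ≤ |Real.log (u * c) * E| := le_abs_self _
              _ = |Real.log (u * c)| * |E| := abs_mul _ _
              _ ≤ L * Ebar := mul_le_mul hL1 hEabs (abs_nonneg _) hL0
          have h2 : -(Real.log |E| * E) ≤ abs (E * Real.log |E|) := by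
            rw [mul_comm]; exact neg_le_abs _
          nlinarith [h1, h2, hxlog]

private lemma holder_nesting (w f : ℝ → ℝ) (hw_meas : Measurable w)
    (hw_int : IntegrableOn w (Icc (0:ℝ) 1))
    (hw_nn : 0 ≤ᵐ[volume.restrict (Icc (0:ℝ) 1)] w)
    {a Q : ℝ} (ha0 : 0 < a) (haQ : a < Q) :
    (∫⁻ t in Icc (0:ℝ) 1, ENNReal.ofReal (|f t| ^ a * w t)) ≤
      (∫⁻ t in Icc (0:ℝ) 1, ENNReal.ofReal (|f t| ^ Q * w t)) ^ (a / Q) *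
      (ENNReal.ofReal (∫ t in Icc (0:ℝ) 1, w t)) ^ (1 - a / Q) := by
  have hQ0 : 0 < Q := lt_trans ha0 haQ
  set ν := volume.restrict (Icc (0:ℝ) 1) with hν
  set D : ℝ → ℝ≥0∞ := fun t => ENNReal.ofReal (w t) with hD
  set μ := ν.withDensity D with hμ
  have hDmeas : Measurable D := ENNReal.measurable_ofReal.comp hw_meas
  have hμuniv : μ univ = ENNReal.ofReal (∫ t in Icc (0:ℝ) 1, w t) := by
    rw [hμ, withDensity_apply _ MeasurableSet.univ, Measure.restrict_univ]
    exact (MeasureTheory.ofReal_integral_eq_lintegral_ofReal hw_int hw_nn).symm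
  haveI : IsFiniteMeasure μ := ⟨by rw [hμuniv]; exact ENNReal.ofReal_lt_top⟩
  have hJμ : ∀ b : ℝ, 0 ≤ b →
      (∫⁻ t in Icc (0:ℝ) 1, ENNReal.ofReal (|f t| ^ b * w t)) =
        ∫⁻ t, (ENNReal.ofReal |f t|) ^ b ∂μ := by
    intro b hb
    rw [hμ, lintegral_withDensity_eq_lintegral_mul_non_measurable ν hDmeas
      (Filter.Eventually.of_forall fun t => ENNReal.ofReal_lt_top)
      (fun t => (ENNReal.ofReal |f t|) ^ b)]
    apply lintegral_congr
    intro t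
    simp only [Pi.mul_apply, hD]
    rw [ENNReal.ofReal_mul (Real.rpow_nonneg (abs_nonneg _) b),
      ENNReal.ofReal_rpow_of_nonneg (abs_nonneg _) hb, mul_comm]
  rw [hJμ a ha0.le, hJμ Q hQ0.le, ← hμuniv]
  obtain ⟨g, hgmeas, hgle, hgeq⟩ :=
    exists_measurable_le_lintegral_eq μ (fun t => (ENNReal.ofReal |f t|) ^ a)
  rw [hgeq]
  set P := Q / a with hP
  have hP1 : 1 < P := (one_lt_div ha0).2 haQ
  have hP0 : 0 < P := lt_trans one_pos hP1
  have hconj : P.HolderConjugate (Real.conjExponent P) := Real.HolderConjugate.conjExponent hP1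
  have hH := ENNReal.lintegral_mul_le_Lp_mul_Lq μ hconj hgmeas.aemeasurable
    (aemeasurable_const (b := (1:ℝ≥0∞)))
  simp only [Pi.mul_apply, mul_one, ENNReal.one_rpow, lintegral_one] at hH
  have haP : a * P = Q := by rw [hP]; field_simp
  have hgP : ∀ t, g t ^ P ≤ (ENNReal.ofReal |f t|) ^ Q := by
    intro t
    have h1 : g t ^ P ≤ ((ENNReal.ofReal |f t|) ^ a) ^ P :=
      ENNReal.rpow_le_rpow (hgle t) hP0.le
    rwa [← ENNReal.rpow_mul, haP] at h1
  have hint : (∫⁻ t, g t ^ P ∂μ) ≤ ∫⁻ t, (ENNReal.ofReal |f t|) ^ Q ∂μ :=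
    lintegral_mono fun t => hgP t
  have hPa : 1 / P = a / Q := by rw [hP, one_div_div]
  have hco : 1 / Real.conjExponent P = 1 - a / Q := by
    have h := hconj.inv_add_inv_eq_one
    have hPa' : P⁻¹ = a / Q := by rw [hP, inv_div]
    rw [one_div]
    linarith
  calc (∫⁻ t, g t ∂μ)
      ≤ (∫⁻ t, g t ^ P ∂μ) ^ (1 / P) * (μ univ) ^ (1 / Real.conjExponent P) := hH
    _ ≤ (∫⁻ t, (ENNReal.ofReal |f t|) ^ Q ∂μ) ^ (1 / P) *
          (μ univ) ^ (1 / Real.conjExponent P) := by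
        gcongr

    _ = (∫⁻ t, (ENNReal.ofReal |f t|) ^ Q ∂μ) ^ (a / Q) * (μ univ) ^ (1 - a / Q) := by
        rw [hPa, hco]

end GrandNormAux

set_option maxHeartbeats 2000000 in
/-- **Lemma 3.3.** Let `0<α<1`, `1<p<1/α`, `q=p/(1-αp)`, `θ>0`, and let `w` be a weight on
`[0,1]`. With `φ(u) = [ (u-q)/(1-α(u-q)) + p ]^{1-(u-q)α}` and `ψ(u) = φ(u^θ)`, the norms
`‖·‖_{L^{q),ψ}_w}` and `‖·‖_{L^{q),θ(1+αq)}_w}` are equivalent. -/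
theorem grandNormPsi_equiv_grandNorm (α p q θ : ℝ) (w : ℝ → ℝ)
    (hα0 : 0 < α) (hα1 : α < 1) (hp : 1 < p) (hpα : p < 1 / α)
    (hq : q = p / (1 - α * p)) (hθ : 0 < θ)
    (hw_meas : Measurable w)
    (hw_pos : ∀ᵐ x ∂(volume.restrict (Set.Icc (0 : ℝ) 1)), 0 < w x)
    (hw_int : IntegrableOn w (Set.Icc (0 : ℝ) 1)) :
    ∃ c₁ > (0 : ℝ), ∃ c₂ > (0 : ℝ), ∀ f : ℝ → ℝ,
      ENNReal.ofReal c₁ * grandNormW q (θ * (1 + α * q)) w f ≤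
        grandNormPhiW q
          (fun u => ((u ^ θ - q) / (1 - α * (u ^ θ - q)) + p) ^ (1 - (u ^ θ - q) * α)) w f ∧
      grandNormPhiW q
          (fun u => ((u ^ θ - q) / (1 - α * (u ^ θ - q)) + p) ^ (1 - (u ^ θ - q) * α)) w f ≤
        ENNReal.ofReal c₂ * grandNormW q (θ * (1 + α * q)) w f := by
  obtain ⟨hc, hqid, hκc, hq1⟩ := aux_basic hα0 hp hpα hq
  have hq0 : (0:ℝ) < q := by linarith
  have hκ0 : (0:ℝ) < 1 + α * q := by nlinarith [mul_pos hα0 hq0]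
  have hΘ0 : 0 < θ * (1 + α * q) := mul_pos hθ hκ0
  have hw_nn : 0 ≤ᵐ[volume.restrict (Icc (0:ℝ) 1)] w := hw_pos.mono fun x hx => hx.le
  set Θ : ℝ := θ * (1 + α * q) with hΘdef
  set m : ℝ := ((1 - α * p) ^ 2) ^ (1 + α * q) with hmdef
  have hm0 : 0 < m := by rw [hmdef]; exact Real.rpow_pos_of_pos (by positivity) _
  set δ : ℝ := min 1 ((q - 1) / 2) with hδdef
  have hδ0 : 0 < δ := lt_min one_pos (by linarith)
  have hδ1 : δ ≤ 1 := min_le_left _ _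
  have hδq : δ < q - 1 := lt_of_le_of_lt (min_le_right _ _) (by linarith)
  have hQ1 : 1 < q - δ := by linarith
  have hQ0 : 0 < q - δ := by linarith
  have hσ0 : 0 < 1 / (q - δ) := by positivity
  have hδΘ0 : 0 < δ ^ Θ := Real.rpow_pos_of_pos hδ0 Θ
  set K' : ℝ := Real.exp ((1 + α * q + α * (q - 1) ^ θ) *
      (|Real.log (δ ^ θ * (1 - α * p))| + |Real.log ((q - 1) ^ θ * (1 - α * p))|) +
      (1 + (1 + α * q + α * (q - 1) ^ θ) ^ 2)) with hK'def
  have hK'1 : 1 ≤ K' := by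
    rw [hK'def]
    have hU0 : (0:ℝ) ≤ (q - 1) ^ θ := Real.rpow_nonneg (by linarith) θ
    have hEb0 : (0:ℝ) ≤ 1 + α * q + α * (q - 1) ^ θ := by
      nlinarith [mul_nonneg hα0.le hU0]
    have hL0 : (0:ℝ) ≤ |Real.log (δ ^ θ * (1 - α * p))| +
        |Real.log ((q - 1) ^ θ * (1 - α * p))| := by positivity
    refine Real.one_le_exp ?_
    nlinarith [mul_nonneg hEb0 hL0, sq_nonneg (1 + α * q + α * (q - 1) ^ θ)]
  have hmax1 : ∀ y : ℝ, (0:ℝ) < max 1 y := fun y => lt_of_lt_of_le one_pos (le_max_left _ _)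
  set C1 : ℝ := max 1 ((q - 1) ^ Θ) * max 1 (∫ t in Icc (0:ℝ) 1, w t) *
      (m * δ ^ Θ) ^ (-(1 / (q - δ))) with hC1def
  have hC10 : 0 < C1 := by
    rw [hC1def]
    have h := Real.rpow_pos_of_pos (mul_pos hm0 hδΘ0) (-(1 / (q - δ)))
    exact mul_pos (mul_pos (hmax1 _) (hmax1 _)) h
  set c₁ : ℝ := min (min 1 m) C1⁻¹ with hc₁def
  set c₂ : ℝ := max (max 1 (Real.exp α)) (K' * max 1 (∫ t in Icc (0:ℝ) 1, w t) *
      (δ ^ Θ) ^ (-(1 / (q - δ)))) with hc₂def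
  have hc₁0 : 0 < c₁ := lt_min (lt_min one_pos hm0) (inv_pos.2 hC10)
  have hc₁1 : c₁ ≤ 1 := le_trans (min_le_left _ _) (min_le_left _ _)
  have hc₁m : c₁ ≤ m := le_trans (min_le_left _ _) (min_le_right _ _)
  have hc₁C : c₁ * C1 ≤ 1 := by
    have h := min_le_right (min 1 m) C1⁻¹
    calc c₁ * C1 ≤ C1⁻¹ * C1 := mul_le_mul_of_nonneg_right h hC10.le
      _ = 1 := inv_mul_cancel₀ (ne_of_gt hC10)
  have hc₂1 : 1 ≤ c₂ := le_trans (le_max_left _ _) (le_max_left _ _)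
  have hMc₂ : Real.exp α ≤ c₂ := le_trans (le_max_right _ _) (le_max_left _ _)
  refine ⟨c₁, hc₁0, c₂, by linarith, fun f => ?_⟩
  set J : ℝ → ℝ≥0∞ := fun a => ∫⁻ t in Icc (0:ℝ) 1, ENNReal.ofReal (|f t| ^ a * w t)
    with hJdef
  have hGW : grandNormW q Θ w f =
      ⨆ ε ∈ Ioo (0:ℝ) (q - 1), (ENNReal.ofReal (ε ^ Θ) * J (q - ε)) ^ (1 / (q - ε)) := rfl
  have hGP : grandNormPhiW q
      (fun u => ((u ^ θ - q) / (1 - α * (u ^ θ - q)) + p) ^ (1 - (u ^ θ - q) * α)) w f =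
      ⨆ ε ∈ Ioo (0:ℝ) (q - 1),
        (ENNReal.ofReal (((ε ^ θ - q) / (1 - α * (ε ^ θ - q)) + p) ^ (1 - (ε ^ θ - q) * α)) *
          J (q - ε)) ^ (1 / (q - ε)) := rfl
  rw [hGW, hGP]
  set SA := ⨆ ε ∈ Ioo (0:ℝ) (q - 1), (ENNReal.ofReal (ε ^ Θ) * J (q - ε)) ^ (1 / (q - ε))
    with hSA
  set SB := ⨆ ε ∈ Ioo (0:ℝ) (q - 1),
      (ENNReal.ofReal (((ε ^ θ - q) / (1 - α * (ε ^ θ - q)) + p) ^ (1 - (ε ^ θ - q) * α)) *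
        J (q - ε)) ^ (1 / (q - ε)) with hSB
  have hδmem : δ ∈ Ioo (0:ℝ) (q - 1) := ⟨hδ0, hδq⟩
  have hψδ : m * δ ^ Θ ≤ ((δ ^ θ - q) / (1 - α * (δ ^ θ - q)) + p) ^ (1 - (δ ^ θ - q) * α) := by
    rw [hmdef, hΘdef]
    exact (psi_small hα0 hp hpα hq hθ hδ0 hδ1).1
  have hmδΘ : 0 < m * δ ^ Θ := mul_pos hm0 hδΘ0
  have hhol : ∀ ε : ℝ, 0 < ε → δ < ε → ε < q - 1 →
      J (q - ε) ≤ (J (q - δ)) ^ ((q - ε) / (q - δ)) *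
        (ENNReal.ofReal (∫ t in Icc (0:ℝ) 1, w t)) ^ (1 - (q - ε) / (q - δ)) := by
    intro ε hε0 hδε hεq
    exact holder_nesting w f hw_meas hw_int hw_nn (by linarith) (by linarith)
  have hSBδ : (ENNReal.ofReal (((δ ^ θ - q) / (1 - α * (δ ^ θ - q)) + p) ^
      (1 - (δ ^ θ - q) * α)) * J (q - δ)) ^ (1 / (q - δ)) ≤ SB := by
    rw [hSB]
    exact le_iSup₂ (f := fun ε (_ : ε ∈ Ioo (0:ℝ) (q - 1)) =>
      (ENNReal.ofReal (((ε ^ θ - q) / (1 - α * (ε ^ θ - q)) + p) ^ (1 - (ε ^ θ - q) * α)) *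
        J (q - ε)) ^ (1 / (q - ε))) δ hδmem
  have hSAδ : (ENNReal.ofReal (δ ^ Θ) * J (q - δ)) ^ (1 / (q - δ)) ≤ SA := by
    rw [hSA]
    exact le_iSup₂ (f := fun ε (_ : ε ∈ Ioo (0:ℝ) (q - 1)) =>
      (ENNReal.ofReal (ε ^ Θ) * J (q - ε)) ^ (1 / (q - ε))) δ hδmem
  have hJB : (J (q - δ)) ^ (1 / (q - δ)) ≤
      ENNReal.ofReal ((m * δ ^ Θ) ^ (-(1 / (q - δ)))) * SB :=
    calc (J (q - δ)) ^ (1 / (q - δ))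
        ≤ ENNReal.ofReal ((m * δ ^ Θ) ^ (-(1 / (q - δ)))) *
          (ENNReal.ofReal (m * δ ^ Θ) * J (q - δ)) ^ (1 / (q - δ)) :=
          aux_extract hmδΘ hσ0.le _
      _ ≤ _ := mul_le_mul_right (le_trans (aux_coeff_le hψδ hσ0.le _) hSBδ) _
  have hJA : (J (q - δ)) ^ (1 / (q - δ)) ≤
      ENNReal.ofReal ((δ ^ Θ) ^ (-(1 / (q - δ)))) * SA :=
    calc (J (q - δ)) ^ (1 / (q - δ))
        ≤ ENNReal.ofReal ((δ ^ Θ) ^ (-(1 / (q - δ)))) *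
          (ENNReal.ofReal (δ ^ Θ) * J (q - δ)) ^ (1 / (q - δ)) := aux_extract hδΘ0 hσ0.le _
      _ ≤ _ := mul_le_mul_right hSAδ _
  constructor
  · -- lower bound
    rw [hSA, ENNReal.mul_iSup]
    refine iSup_le fun ε => ?_
    rw [ENNReal.mul_iSup]
    refine iSup_le fun hε => ?_
    obtain ⟨hε0, hεq⟩ := hε
    have haq : 1 < q - ε := by linarith
    have ha0 : 0 < q - ε := by linarith
    have hr0 : (0:ℝ) ≤ 1 / (q - ε) := by positivity
    have hr1 : 1 / (q - ε) ≤ 1 := by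
      rw [div_le_one ha0]; linarith
    rcases le_or_gt ε δ with hsm | hlg
    · have hψ : c₁ ^ (q - ε) * ε ^ Θ ≤
          ((ε ^ θ - q) / (1 - α * (ε ^ θ - q)) + p) ^ (1 - (ε ^ θ - q) * α) := by
        have h1 : c₁ ^ (q - ε) ≤ c₁ := by
          calc c₁ ^ (q - ε) ≤ c₁ ^ (1:ℝ) :=
                Real.rpow_le_rpow_of_exponent_ge hc₁0 hc₁1 haq.le
            _ = c₁ := Real.rpow_one c₁
        have h2 : m * ε ^ Θ ≤
            ((ε ^ θ - q) / (1 - α * (ε ^ θ - q)) + p) ^ (1 - (ε ^ θ - q) * α) := by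
          rw [hmdef, hΘdef]
          exact (psi_small hα0 hp hpα hq hθ hε0 (le_trans hsm hδ1)).1
        calc c₁ ^ (q - ε) * ε ^ Θ ≤ m * ε ^ Θ :=
              mul_le_mul_of_nonneg_right (le_trans h1 hc₁m) (Real.rpow_nonneg hε0.le Θ)
          _ ≤ _ := h2
      calc ENNReal.ofReal c₁ * (ENNReal.ofReal (ε ^ Θ) * J (q - ε)) ^ (1 / (q - ε))
          = (ENNReal.ofReal (c₁ ^ (q - ε) * ε ^ Θ) * J (q - ε)) ^ (1 / (q - ε)) := by
            rw [aux_ofReal_rpow_cancel hc₁0 ha0, ← ENNReal.mul_rpow_of_nonneg _ _ hr0,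
              ← mul_assoc, ← ENNReal.ofReal_mul (Real.rpow_nonneg hc₁0.le _)]
        _ ≤ (ENNReal.ofReal (((ε ^ θ - q) / (1 - α * (ε ^ θ - q)) + p) ^
              (1 - (ε ^ θ - q) * α)) * J (q - ε)) ^ (1 / (q - ε)) := aux_coeff_le hψ hr0 _
        _ ≤ SB := by
            rw [hSB]
            exact le_iSup₂ (f := fun ε (_ : ε ∈ Ioo (0:ℝ) (q - 1)) =>
              (ENNReal.ofReal (((ε ^ θ - q) / (1 - α * (ε ^ θ - q)) + p) ^
                (1 - (ε ^ θ - q) * α)) * J (q - ε)) ^ (1 / (q - ε))) ε ⟨hε0, hεq⟩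
    · have hexp : (q - ε) / (q - δ) * (1 / (q - ε)) = 1 / (q - δ) := by
        field_simp
      have hs1 : (q - ε) / (q - δ) ≤ 1 := by
        rw [div_le_one hQ0]; linarith
      have hw1 : (1 - (q - ε) / (q - δ)) * (1 / (q - ε)) ≤ 1 := by
        have h0 : 1 - (q - ε) / (q - δ) ≤ 1 := by
          have h0' : 0 ≤ (q - ε) / (q - δ) := by positivity
          linarith
        have hs0 : 0 ≤ 1 - (q - ε) / (q - δ) := by linarith
        calc (1 - (q - ε) / (q - δ)) * (1 / (q - ε)) ≤ 1 * 1 :=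
              mul_le_mul h0 hr1 hr0 one_pos.le
          _ = 1 := mul_one 1
      have hs0 : 0 ≤ 1 - (q - ε) / (q - δ) := by linarith
      have hA : (ENNReal.ofReal (ε ^ Θ) * J (q - ε)) ^ (1 / (q - ε)) ≤
          ENNReal.ofReal C1 * SB := by
        calc (ENNReal.ofReal (ε ^ Θ) * J (q - ε)) ^ (1 / (q - ε))
            ≤ (ENNReal.ofReal (ε ^ Θ) * ((J (q - δ)) ^ ((q - ε) / (q - δ)) *
                (ENNReal.ofReal (∫ t in Icc (0:ℝ) 1, w t)) ^ (1 - (q - ε) / (q - δ)))) ^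
                (1 / (q - ε)) :=
              ENNReal.rpow_le_rpow (mul_le_mul_right (hhol ε hε0 hlg hεq) _) hr0
          _ = (ENNReal.ofReal (ε ^ Θ)) ^ (1 / (q - ε)) * ((J (q - δ)) ^ (1 / (q - δ)) *
                (ENNReal.ofReal (∫ t in Icc (0:ℝ) 1, w t)) ^
                  ((1 - (q - ε) / (q - δ)) * (1 / (q - ε)))) := by
              rw [ENNReal.mul_rpow_of_nonneg _ _ hr0, ENNReal.mul_rpow_of_nonneg _ _ hr0,
                ← ENNReal.rpow_mul, ← ENNReal.rpow_mul, hexp]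
          _ ≤ ENNReal.ofReal (max 1 ((q - 1) ^ Θ)) * ((J (q - δ)) ^ (1 / (q - δ)) *
                ENNReal.ofReal (max 1 (∫ t in Icc (0:ℝ) 1, w t))) := by
              refine mul_le_mul' ?_ (mul_le_mul' le_rfl (aux_rpow_le_max (by positivity) hw1))
              exact le_trans (ENNReal.rpow_le_rpow (ENNReal.ofReal_le_ofReal
                (Real.rpow_le_rpow hε0.le hεq.le hΘ0.le)) hr0) (aux_rpow_le_max hr0 hr1)
          _ ≤ ENNReal.ofReal (max 1 ((q - 1) ^ Θ)) *
                ((ENNReal.ofReal ((m * δ ^ Θ) ^ (-(1 / (q - δ)))) * SB) *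
                  ENNReal.ofReal (max 1 (∫ t in Icc (0:ℝ) 1, w t))) :=
              mul_le_mul' le_rfl (mul_le_mul' hJB le_rfl)
          _ = ENNReal.ofReal C1 * SB := by
              rw [hC1def,
                ENNReal.ofReal_mul (mul_nonneg (hmax1 _).le (hmax1 _).le),
                ENNReal.ofReal_mul (hmax1 ((q - 1) ^ Θ)).le]
              ring
      calc ENNReal.ofReal c₁ * (ENNReal.ofReal (ε ^ Θ) * J (q - ε)) ^ (1 / (q - ε))
          ≤ ENNReal.ofReal c₁ * (ENNReal.ofReal C1 * SB) := mul_le_mul_right hA _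
        _ = ENNReal.ofReal (c₁ * C1) * SB := by
            rw [ENNReal.ofReal_mul hc₁0.le, mul_assoc]
        _ ≤ 1 * SB := by
            refine mul_le_mul_left ?_ _
            simpa using ENNReal.ofReal_le_ofReal hc₁C
        _ = SB := one_mul _
  · -- upper bound
    rw [hSB]
    refine iSup₂_le fun ε hε => ?_
    obtain ⟨hε0, hεq⟩ := hε
    have haq : 1 < q - ε := by linarith
    have ha0 : 0 < q - ε := by linarith
    have hr0 : (0:ℝ) ≤ 1 / (q - ε) := by positivity
    have hr1 : 1 / (q - ε) ≤ 1 := by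
      rw [div_le_one ha0]; linarith
    rcases le_or_gt ε δ with hsm | hlg
    · have hψ : ((ε ^ θ - q) / (1 - α * (ε ^ θ - q)) + p) ^ (1 - (ε ^ θ - q) * α) ≤
          c₂ ^ (q - ε) * ε ^ Θ := by
        have h2 : ((ε ^ θ - q) / (1 - α * (ε ^ θ - q)) + p) ^ (1 - (ε ^ θ - q) * α) ≤
            Real.exp α * ε ^ Θ := by
          rw [hΘdef]
          exact (psi_small hα0 hp hpα hq hθ hε0 (le_trans hsm hδ1)).2
        have h1 : c₂ ≤ c₂ ^ (q - ε) := by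
          calc c₂ = c₂ ^ (1:ℝ) := (Real.rpow_one c₂).symm
            _ ≤ c₂ ^ (q - ε) := Real.rpow_le_rpow_of_exponent_le hc₂1 haq.le
        calc ((ε ^ θ - q) / (1 - α * (ε ^ θ - q)) + p) ^ (1 - (ε ^ θ - q) * α)
            ≤ Real.exp α * ε ^ Θ := h2
          _ ≤ c₂ ^ (q - ε) * ε ^ Θ :=
              mul_le_mul_of_nonneg_right (le_trans hMc₂ h1) (Real.rpow_nonneg hε0.le Θ)
      calc (ENNReal.ofReal (((ε ^ θ - q) / (1 - α * (ε ^ θ - q)) + p) ^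
            (1 - (ε ^ θ - q) * α)) * J (q - ε)) ^ (1 / (q - ε))
          ≤ (ENNReal.ofReal (c₂ ^ (q - ε) * ε ^ Θ) * J (q - ε)) ^ (1 / (q - ε)) :=
            aux_coeff_le hψ hr0 _
        _ = ENNReal.ofReal c₂ * (ENNReal.ofReal (ε ^ Θ) * J (q - ε)) ^ (1 / (q - ε)) := by
            rw [aux_ofReal_rpow_cancel (by linarith : (0:ℝ) < c₂) ha0,
              ← ENNReal.mul_rpow_of_nonneg _ _ hr0, ← mul_assoc,
              ← ENNReal.ofReal_mul (Real.rpow_nonneg (by linarith : (0:ℝ) ≤ c₂) _)]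
        _ ≤ ENNReal.ofReal c₂ * SA := by
            refine mul_le_mul_right ?_ _
            rw [hSA]
            exact le_iSup₂ (f := fun ε (_ : ε ∈ Ioo (0:ℝ) (q - 1)) =>
              (ENNReal.ofReal (ε ^ Θ) * J (q - ε)) ^ (1 / (q - ε))) ε ⟨hε0, hεq⟩
    · have hψK : ((ε ^ θ - q) / (1 - α * (ε ^ θ - q)) + p) ^ (1 - (ε ^ θ - q) * α) ≤ K' := by
        rw [hK'def]
        exact psi_large hα0 hp hpα hq hθ hδ0 hlg.le hεq.le
      have hexp : (q - ε) / (q - δ) * (1 / (q - ε)) = 1 / (q - δ) := by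
        field_simp
      have hs1 : (q - ε) / (q - δ) ≤ 1 := by
        rw [div_le_one hQ0]; linarith
      have hw1 : (1 - (q - ε) / (q - δ)) * (1 / (q - ε)) ≤ 1 := by
        have h0 : 1 - (q - ε) / (q - δ) ≤ 1 := by
          have h0' : 0 ≤ (q - ε) / (q - δ) := by positivity
          linarith
        calc (1 - (q - ε) / (q - δ)) * (1 / (q - ε)) ≤ 1 * 1 :=
              mul_le_mul h0 hr1 hr0 one_pos.le
          _ = 1 := mul_one 1
      have hs0 : 0 ≤ 1 - (q - ε) / (q - δ) := by linarith
      calc (ENNReal.ofReal (((ε ^ θ - q) / (1 - α * (ε ^ θ - q)) + p) ^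
            (1 - (ε ^ θ - q) * α)) * J (q - ε)) ^ (1 / (q - ε))
          ≤ (ENNReal.ofReal K' * ((J (q - δ)) ^ ((q - ε) / (q - δ)) *
              (ENNReal.ofReal (∫ t in Icc (0:ℝ) 1, w t)) ^ (1 - (q - ε) / (q - δ)))) ^
              (1 / (q - ε)) :=
            ENNReal.rpow_le_rpow
              (mul_le_mul' (ENNReal.ofReal_le_ofReal hψK) (hhol ε hε0 hlg hεq)) hr0
        _ = (ENNReal.ofReal K') ^ (1 / (q - ε)) * ((J (q - δ)) ^ (1 / (q - δ)) *
              (ENNReal.ofReal (∫ t in Icc (0:ℝ) 1, w t)) ^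
                ((1 - (q - ε) / (q - δ)) * (1 / (q - ε)))) := by
            rw [ENNReal.mul_rpow_of_nonneg _ _ hr0, ENNReal.mul_rpow_of_nonneg _ _ hr0,
              ← ENNReal.rpow_mul, ← ENNReal.rpow_mul, hexp]
        _ ≤ ENNReal.ofReal K' * ((J (q - δ)) ^ (1 / (q - δ)) *
              ENNReal.ofReal (max 1 (∫ t in Icc (0:ℝ) 1, w t))) := by
            refine mul_le_mul' ?_ (mul_le_mul' le_rfl (aux_rpow_le_max (by positivity) hw1))
            refine le_trans (aux_rpow_le_max hr0 hr1) ?_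
            rw [max_eq_right hK'1]
        _ ≤ ENNReal.ofReal K' * ((ENNReal.ofReal ((δ ^ Θ) ^ (-(1 / (q - δ)))) * SA) *
              ENNReal.ofReal (max 1 (∫ t in Icc (0:ℝ) 1, w t))) :=
            mul_le_mul' le_rfl (mul_le_mul' hJA le_rfl)
        _ = ENNReal.ofReal (K' * max 1 (∫ t in Icc (0:ℝ) 1, w t) *
              (δ ^ Θ) ^ (-(1 / (q - δ)))) * SA := by
            rw [ENNReal.ofReal_mul (mul_nonneg (by linarith : (0:ℝ) ≤ K') (hmax1 _).le),
              ENNReal.ofReal_mul (by linarith : (0:ℝ) ≤ K')]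
            ring
        _ ≤ ENNReal.ofReal c₂ * SA := by
            refine mul_le_mul_left (ENNReal.ofReal_le_ofReal ?_) _
            rw [hc₂def]
            exact le_max_right _ _
end

section
/- Let 0<α<1, 1<p<1/α, and q=p/(1−αp). The function f(t)=t^{−1/p} on (0,1) belongs to the grand Lebesgue space L^{p)}([0,1]) but not to L^p([0,1]), and its Riesz potential I_α f belongs to L^{q)}([0,1]) but not to L^q([0,1]). In particular, there exists a function f ∈ L^{p)}([0,1]) \ L^p([0,1]) such that I_α f ∈ L^{q)}([0,1]) \ L^q([0,1]). -/
open MeasureTheory Set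
open scoped ENNReal

/-- Grand Lebesgue norm on `[0,1]` of an `ℝ≥0∞`-valued function (with `θ = 1`,
i.e. the space `L^{p)} = L^{p),1}`). -/
noncomputable def grandNormE (p : ℝ) (f : ℝ → ℝ≥0∞) : ℝ≥0∞ :=
  ⨆ ε ∈ Set.Ioo (0 : ℝ) (p - 1),
    (ENNReal.ofReal ε * ∫⁻ t in Set.Icc (0 : ℝ) 1, f t ^ (p - ε)) ^ (1 / (p - ε))

/-- Grand Lebesgue norm on `[0,1]` of a real function. -/
noncomputable def grandNorm (p : ℝ) (f : ℝ → ℝ) : ℝ≥0∞ :=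
  grandNormE p (fun t => ENNReal.ofReal |f t|)

/-- The Riesz potential `(I_α f)(x) = ∫₀¹ f(y)/|x-y|^{1-α} dy` of a nonnegative
function, with values in `ℝ≥0∞`. -/
noncomputable def rieszPotential (α : ℝ) (f : ℝ → ℝ) (x : ℝ) : ℝ≥0∞ :=
  ∫⁻ y in Set.Icc (0 : ℝ) 1, ENNReal.ofReal (f y) / ENNReal.ofReal (|x - y| ^ (1 - α))

namespace GLaux

lemma lintegral_rpow_Icc {b r : ℝ} (hb : 0 ≤ b) (hr : -1 < r) :
    ∫⁻ t in Icc (0:ℝ) b, ENNReal.ofReal (t ^ r) = ENNReal.ofReal (b ^ (r+1) / (r+1)) := by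
  rw [← setLIntegral_congr (Ioc_ae_eq_Icc (μ := volume) (a := (0:ℝ)) (b := b))]
  have hint : IntegrableOn (fun t : ℝ => t ^ r) (Ioc 0 b) volume := by
    have := intervalIntegral.intervalIntegrable_rpow' (a := 0) (b := b) hr
    rwa [intervalIntegrable_iff_integrableOn_Ioc_of_le hb] at this
  have hnn : 0 ≤ᵐ[volume.restrict (Ioc (0:ℝ) b)] fun t : ℝ => t ^ r := by
    filter_upwards [ae_restrict_mem measurableSet_Ioc] with t ht
    exact Real.rpow_nonneg ht.1.le r
  rw [← ofReal_integral_eq_lintegral_ofReal hint hnn]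
  congr 1
  rw [← intervalIntegral.integral_of_le hb, integral_rpow (Or.inl hr),
    Real.zero_rpow (by linarith), sub_zero]

lemma lintegral_rpow_Icc_one {r : ℝ} (hr : -1 < r) :
    ∫⁻ t in Icc (0:ℝ) 1, ENNReal.ofReal (t ^ r) = ENNReal.ofReal (1 / (r+1)) := by
  rw [lintegral_rpow_Icc zero_le_one hr, Real.one_rpow]

lemma lintegral_rpow_top {r : ℝ} (hr : r ≤ -1) :
    ∫⁻ t in Icc (0:ℝ) 1, ENNReal.ofReal (t ^ r) = ⊤ := by
  have h1 : ∫⁻ t in Ioo (0:ℝ) 1, ENNReal.ofReal (t ^ (-1:ℝ)) = ⊤ := by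
    by_contra h
    have hg : IntegrableOn (fun t : ℝ => t ^ (-1:ℝ)) (Ioo 0 1) volume := by
      constructor
      · exact (ContinuousOn.rpow_const continuousOn_id fun x hx => Or.inl (ne_of_gt hx.1)).aestronglyMeasurable measurableSet_Ioo
      · rw [hasFiniteIntegral_iff_norm]
        have : ∫⁻ t in Ioo (0:ℝ) 1, ENNReal.ofReal ‖t ^ (-1:ℝ)‖ =
            ∫⁻ t in Ioo (0:ℝ) 1, ENNReal.ofReal (t ^ (-1:ℝ)) :=
          setLIntegral_congr_fun measurableSet_Ioo (fun t ht => by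
            beta_reduce; rw [Real.norm_eq_abs, abs_of_nonneg (Real.rpow_nonneg ht.1.le _)])
        rw [this]
        exact lt_top_iff_ne_top.mpr h
    rw [intervalIntegral.integrableOn_Ioo_rpow_iff zero_lt_one] at hg
    linarith
  refine top_unique ?_
  calc (⊤:ℝ≥0∞) = ∫⁻ t in Ioo (0:ℝ) 1, ENNReal.ofReal (t ^ (-1:ℝ)) := h1.symm
    _ ≤ ∫⁻ t in Ioo (0:ℝ) 1, ENNReal.ofReal (t ^ r) := by
        refine lintegral_mono_ae ?_
        filter_upwards [ae_restrict_mem measurableSet_Ioo] with t ht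
        exact ENNReal.ofReal_le_ofReal
          (Real.rpow_le_rpow_of_exponent_ge ht.1 ht.2.le hr)
    _ ≤ ∫⁻ t in Icc (0:ℝ) 1, ENNReal.ofReal (t ^ r) :=
        lintegral_mono_set Ioo_subset_Icc_self

lemma lintegral_rpow_Ioc_le {a r : ℝ} (ha : 0 < a) (hr : r < -1) :
    ∫⁻ t in Ioc a 1, ENNReal.ofReal (t ^ r) ≤ ENNReal.ofReal (a ^ (r+1) / (-(r+1))) := by
  rcases le_or_gt 1 a with h | h
  · rw [Ioc_eq_empty (by exact not_lt.mpr h)]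
    simp
  · have hint : IntegrableOn (fun t : ℝ => t ^ r) (Ioc a 1) volume := by
      refine (intervalIntegrable_iff_integrableOn_Ioc_of_le h.le).mp ?_
      refine intervalIntegral.intervalIntegrable_rpow (μ := volume) (Or.inr ?_)
      rw [uIcc_of_le h.le]
      intro h0
      exact absurd h0.1 (not_le.mpr ha)
    have hnn : 0 ≤ᵐ[volume.restrict (Ioc a 1)] fun t : ℝ => t ^ r := by
      filter_upwards [ae_restrict_mem measurableSet_Ioc] with t ht
      exact Real.rpow_nonneg (le_of_lt (lt_trans ha ht.1)) r
    rw [← ofReal_integral_eq_lintegral_ofReal hint hnn]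
    refine ENNReal.ofReal_le_ofReal ?_
    rw [← intervalIntegral.integral_of_le h.le,
      integral_rpow (Or.inr ⟨by linarith, by rw [uIcc_of_le h.le]; intro h0; linarith [h0.1]⟩),
      Real.one_rpow]
    have h1 : (0:ℝ) < -(r+1) := by linarith
    have e : (1 - a^(r+1))/(r+1) = (a^(r+1) - 1)/(-(r+1)) := by
      rw [div_neg, ← neg_div, neg_sub]
    rw [e, div_le_div_iff₀ h1 h1]
    nlinarith [Real.rpow_nonneg ha.le (r+1)]

lemma map_sub_left (c : ℝ) (g : ℝ → ℝ≥0∞) (s : Set ℝ) :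
    ∫⁻ y in (fun y => c - y) ⁻¹' s, g (c - y) = ∫⁻ t in s, g t :=
  (Measure.measurePreserving_sub_left volume c).setLIntegral_comp_preimage_emb
    (MeasurableEquiv.subLeft c).measurableEmbedding g s

lemma mapNeg (g : ℝ → ℝ≥0∞) (s : Set ℝ) :
    ∫⁻ y in (fun y : ℝ => -y) ⁻¹' s, g (-y) = ∫⁻ t in s, g t :=
  (Measure.measurePreserving_neg volume).setLIntegral_comp_preimage_emb
    (MeasurableEquiv.neg ℝ).measurableEmbedding g s

lemma lintegral_abs_sub {x : ℝ} (hx : 0 ≤ x) {r : ℝ} (hr : -1 < r) :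
    ∫⁻ y in Icc (0:ℝ) (2*x), ENNReal.ofReal (|x - y| ^ r)
      ≤ 2 * ENNReal.ofReal (x ^ (r+1) / (r+1)) := by
  have h0 : Icc (0:ℝ) (2*x) = (fun y => x - y) ⁻¹' (Icc (-x) x) := by
    ext y
    simp only [mem_Icc, mem_preimage]
    constructor <;> intro h <;> constructor <;> linarith [h.1, h.2]
  rw [h0, map_sub_left x (fun t => ENNReal.ofReal (|t| ^ r)) (Icc (-x) x)]
  have hsub : Icc (-x) x ⊆ Icc (-x) 0 ∪ Icc 0 x := by
    intro t ht
    rcases le_or_gt t 0 with h | h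
    · exact Or.inl ⟨ht.1, h⟩
    · exact Or.inr ⟨h.le, ht.2⟩
  refine le_trans (lintegral_mono_set hsub) (le_trans (lintegral_union_le _ _ _) ?_)
  have hpos : ∫⁻ t in Icc (0:ℝ) x, ENNReal.ofReal (|t| ^ r)
      = ENNReal.ofReal (x ^ (r+1) / (r+1)) := by
    rw [setLIntegral_congr_fun (f := fun t => ENNReal.ofReal (|t| ^ r))
      (g := fun t => ENNReal.ofReal (t ^ r)) measurableSet_Icc
      (fun t (ht : t ∈ Icc (0:ℝ) x) => by beta_reduce; rw [abs_of_nonneg ht.1])]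
    exact lintegral_rpow_Icc hx hr
  have hneg : ∫⁻ t in Icc (-x) (0:ℝ), ENNReal.ofReal (|t| ^ r)
      = ∫⁻ t in Icc (0:ℝ) x, ENNReal.ofReal (|t| ^ r) := by
    have h1 : Icc (-x) (0:ℝ) = (fun y : ℝ => -y) ⁻¹' (Icc 0 x) := by
      ext t
      simp only [mem_Icc, mem_preimage]
      constructor <;> intro h <;> constructor <;> linarith [h.1, h.2]
    have h2 : (fun t : ℝ => ENNReal.ofReal (|t| ^ r))
        = fun t : ℝ => ENNReal.ofReal (|(-t)| ^ r) := by
      funext t; rw [abs_neg]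
    rw [h1]
    calc ∫⁻ t in (fun y : ℝ => -y) ⁻¹' (Icc 0 x), ENNReal.ofReal (|t| ^ r)
        = ∫⁻ t in (fun y : ℝ => -y) ⁻¹' (Icc 0 x), ENNReal.ofReal (|(-t)| ^ r) := by
          rw [← h2]
      _ = ∫⁻ t in Icc (0:ℝ) x, ENNReal.ofReal (|t| ^ r) :=
          mapNeg (fun t => ENNReal.ofReal (|t| ^ r)) (Icc 0 x)
  rw [hpos, hneg, hpos, two_mul]


lemma riesz_lower {α s : ℝ} (hα1 : α < 1) (hs0 : 0 < s) {x : ℝ} (hx : 0 < x) (hx1 : x ≤ 1) :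
    ENNReal.ofReal (x ^ (α - s)) ≤ rieszPotential α (fun t => t ^ (-s)) x := by
  unfold rieszPotential
  have hsub : Ioc (0:ℝ) x ⊆ Icc (0:ℝ) 1 := fun y hy => ⟨hy.1.le, hy.2.trans hx1⟩
  refine le_trans ?_ (lintegral_mono_set hsub)
  have hb : ∀ y ∈ Ioc (0:ℝ) x,
      ENNReal.ofReal (x^(-s)) / ENNReal.ofReal (x^(1-α))
        ≤ ENNReal.ofReal (y ^ (-s)) / ENNReal.ofReal (|x - y| ^ (1-α)) := by
    intro y hy
    refine ENNReal.div_le_div (ENNReal.ofReal_le_ofReal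
      (Real.rpow_le_rpow_of_nonpos hy.1 hy.2 (neg_nonpos.mpr hs0.le)))
      (ENNReal.ofReal_le_ofReal (Real.rpow_le_rpow (abs_nonneg _) ?_ (by linarith)))
    rw [abs_of_nonneg (by linarith [hy.2] : (0:ℝ) ≤ x - y)]
    linarith [hy.1]
  calc ENNReal.ofReal (x ^ (α-s))
      = (ENNReal.ofReal (x^(-s)) / ENNReal.ofReal (x^(1-α))) * volume (Ioc (0:ℝ) x) := by
        rw [Real.volume_Ioc, sub_zero, ← ENNReal.ofReal_div_of_pos (Real.rpow_pos_of_pos hx _),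
          ← ENNReal.ofReal_mul (by positivity)]
        congr 1
        rw [div_mul_eq_mul_div, ← Real.rpow_add_one (ne_of_gt hx), ← Real.rpow_sub hx]
        congr 1
        ring
    _ = ∫⁻ _ in Ioc (0:ℝ) x, (ENNReal.ofReal (x^(-s)) / ENNReal.ofReal (x^(1-α))) := by
        rw [setLIntegral_const]
    _ ≤ ∫⁻ y in Ioc (0:ℝ) x, ENNReal.ofReal (y ^ (-s)) / ENNReal.ofReal (|x - y| ^ (1-α)) :=
        lintegral_mono_ae ((ae_restrict_iff' measurableSet_Ioc).mpr (ae_of_all _ hb))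

lemma riesz_upper {α s : ℝ} (hα : 0 < α) (hαs : α < s) (hs1 : s < 1) {x : ℝ}
    (hx : 0 < x) (hx1 : x ≤ 1) :
    rieszPotential α (fun t => t ^ (-s)) x
      ≤ ENNReal.ofReal (2^(s-α)/(1-s) + 2*2^s/α + 2^(1-α)*2^(α-s)/(s-α))
          * ENNReal.ofReal (x ^ (α - s)) := by
  have hα1 : α < 1 := hαs.trans hs1
  have hx2 : (0:ℝ) < x/2 := by positivity
  have h2pos : ∀ c : ℝ, (0:ℝ) < 2 ^ c := fun c => Real.rpow_pos_of_pos two_pos c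
  unfold rieszPotential
  have cover : Icc (0:ℝ) 1 ⊆ (Icc (0:ℝ) (x/2) ∪ Ioc (x/2) (2*x)) ∪ Ioc (2*x) 1 := by
    intro y hy
    rcases le_or_gt y (x/2) with h | h
    · exact Or.inl (Or.inl ⟨hy.1, h⟩)
    rcases le_or_gt y (2*x) with h2 | h2
    · exact Or.inl (Or.inr ⟨h, h2⟩)
    · exact Or.inr ⟨h2, hy.2⟩
  refine le_trans (lintegral_mono_set cover) ?_
  refine le_trans (le_trans (lintegral_union_le _ _ _)
    (add_le_add_left (lintegral_union_le _ _ _) _)) ?_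
  have bound1 : ∫⁻ y in Icc (0:ℝ) (x/2),
      ENNReal.ofReal (y ^ (-s)) / ENNReal.ofReal (|x - y| ^ (1-α))
        ≤ ENNReal.ofReal (2^(s-α)/(1-s)) * ENNReal.ofReal (x ^ (α-s)) := by
    have hb1 : ∀ y ∈ Icc (0:ℝ) (x/2),
        ENNReal.ofReal (y ^ (-s)) / ENNReal.ofReal (|x - y| ^ (1-α))
          ≤ ENNReal.ofReal (y ^ (-s)) * ENNReal.ofReal ((x/2)^(α-1)) := by
      intro y hy
      rw [div_eq_mul_inv]
      refine mul_le_mul_right ?_ _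
      have h1 : (x/2) ^ (1-α) ≤ |x - y| ^ (1-α) := by
        refine Real.rpow_le_rpow hx2.le ?_ (by linarith)
        rw [abs_of_nonneg (by linarith [hy.2] : (0:ℝ) ≤ x - y)]
        linarith [hy.2]
      calc (ENNReal.ofReal (|x - y| ^ (1-α)))⁻¹
          ≤ (ENNReal.ofReal ((x/2)^(1-α)))⁻¹ :=
            ENNReal.inv_le_inv' (ENNReal.ofReal_le_ofReal h1)
        _ = ENNReal.ofReal (((x/2)^(1-α))⁻¹) :=
            (ENNReal.ofReal_inv_of_pos (Real.rpow_pos_of_pos hx2 _)).symm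
        _ = ENNReal.ofReal ((x/2)^(α-1)) := by
            rw [← Real.rpow_neg hx2.le]
            norm_num
    calc ∫⁻ y in Icc (0:ℝ) (x/2),
        ENNReal.ofReal (y ^ (-s)) / ENNReal.ofReal (|x - y| ^ (1-α))
        ≤ ∫⁻ y in Icc (0:ℝ) (x/2),
            ENNReal.ofReal (y ^ (-s)) * ENNReal.ofReal ((x/2)^(α-1)) :=
          lintegral_mono_ae ((ae_restrict_iff' measurableSet_Icc).mpr (ae_of_all _ hb1))
      _ = (∫⁻ y in Icc (0:ℝ) (x/2), ENNReal.ofReal (y ^ (-s)))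
            * ENNReal.ofReal ((x/2)^(α-1)) :=
          lintegral_mul_const' _ _ ENNReal.ofReal_ne_top
      _ = ENNReal.ofReal ((x/2) ^ (-s+1) / (-s+1)) * ENNReal.ofReal ((x/2)^(α-1)) := by
          rw [lintegral_rpow_Icc hx2.le (by linarith : (-1:ℝ) < -s)]
      _ = ENNReal.ofReal (2^(s-α)/(1-s)) * ENNReal.ofReal (x ^ (α-s)) := by
          rw [← ENNReal.ofReal_mul
              (div_nonneg (Real.rpow_nonneg hx2.le _) (by linarith)),
            ← ENNReal.ofReal_mul (div_nonneg (h2pos _).le (by linarith))]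
          congr 1
          have e1 : (x/2) ^ (-s+1) * (x/2)^(α-1) = (x/2) ^ (α-s) := by
            rw [← Real.rpow_add hx2]
            congr 1
            ring
          have e2 : (x/2) ^ (α-s) = x ^ (α-s) / 2 ^ (α-s) := Real.div_rpow hx.le two_pos.le (α-s)
          have e3 : (2:ℝ)^(s-α) = (2 ^ (α-s))⁻¹ := by
            rw [← Real.rpow_neg two_pos.le]
            congr 1
            ring
          rw [div_mul_eq_mul_div, e1, e2, e3]
          have := (h2pos (α-s)).ne'
          field_simp
          ring
      
  have bound2 : ∫⁻ y in Ioc (x/2) (2*x),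
      ENNReal.ofReal (y ^ (-s)) / ENNReal.ofReal (|x - y| ^ (1-α))
        ≤ ENNReal.ofReal (2*2^s/α) * ENNReal.ofReal (x ^ (α-s)) := by
    have hxne : ∀ᵐ y ∂(volume.restrict (Ioc (x/2) (2*x))), y ≠ x := by
      refine Filter.Eventually.filter_mono (ae_mono Measure.restrict_le_self) ?_
      have h : {y : ℝ | ¬ y ≠ x} = {x} := by ext y; simp
      rw [ae_iff, h]
      exact measure_singleton x
    have hb2 : ∀ᵐ y ∂(volume.restrict (Ioc (x/2) (2*x))),
        ENNReal.ofReal (y ^ (-s)) / ENNReal.ofReal (|x - y| ^ (1-α))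
          ≤ ENNReal.ofReal ((x/2)^(-s)) * ENNReal.ofReal (|x - y| ^ (α-1)) := by
      filter_upwards [ae_restrict_mem measurableSet_Ioc, hxne] with y hy hyx
      have habs : (0:ℝ) < |x - y| := abs_pos.mpr (sub_ne_zero.mpr (Ne.symm hyx))
      have hden : (ENNReal.ofReal (|x - y| ^ (1-α)))⁻¹ = ENNReal.ofReal (|x - y| ^ (α-1)) := by
        rw [← ENNReal.ofReal_inv_of_pos (Real.rpow_pos_of_pos habs _),
          ← Real.rpow_neg habs.le]
        norm_num
      rw [div_eq_mul_inv, hden]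
      exact mul_le_mul' (ENNReal.ofReal_le_ofReal
        (Real.rpow_le_rpow_of_nonpos hx2 hy.1.le (neg_nonpos.mpr (by linarith)))) le_rfl
    calc ∫⁻ y in Ioc (x/2) (2*x),
        ENNReal.ofReal (y ^ (-s)) / ENNReal.ofReal (|x - y| ^ (1-α))
        ≤ ∫⁻ y in Ioc (x/2) (2*x),
            ENNReal.ofReal ((x/2)^(-s)) * ENNReal.ofReal (|x - y| ^ (α-1)) :=
          lintegral_mono_ae hb2
      _ = ENNReal.ofReal ((x/2)^(-s))
            * ∫⁻ y in Ioc (x/2) (2*x), ENNReal.ofReal (|x - y| ^ (α-1)) :=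
          lintegral_const_mul' _ _ ENNReal.ofReal_ne_top
      _ ≤ ENNReal.ofReal ((x/2)^(-s))
            * ∫⁻ y in Icc (0:ℝ) (2*x), ENNReal.ofReal (|x - y| ^ (α-1)) := by
          refine mul_le_mul_right (lintegral_mono_set ?_) _
          intro y hy
          exact ⟨by linarith [hy.1], hy.2⟩
      _ ≤ ENNReal.ofReal ((x/2)^(-s)) * (2 * ENNReal.ofReal (x ^ (α-1+1) / (α-1+1))) :=
          mul_le_mul_right (lintegral_abs_sub hx.le (by linarith : (-1:ℝ) < α-1)) _
      _ = ENNReal.ofReal (2*2^s/α) * ENNReal.ofReal (x ^ (α-s)) := by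
          have e : α - 1 + 1 = α := by ring
          rw [e, (by norm_num : (2:ℝ≥0∞) = ENNReal.ofReal 2),
            ← ENNReal.ofReal_mul (by norm_num : (0:ℝ) ≤ 2),
            ← ENNReal.ofReal_mul (Real.rpow_nonneg hx2.le _),
            ← ENNReal.ofReal_mul (div_nonneg (by positivity) hα.le)]
          congr 1
          have hxas : x^(α-s) = x^α * x^(-s) := by
            rw [sub_eq_add_neg, Real.rpow_add hx]
          have h2s : (2:ℝ)^(-s) = ((2:ℝ)^s)⁻¹ := Real.rpow_neg two_pos.le s
          rw [Real.div_rpow hx.le two_pos.le, h2s, hxas]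
          have := (h2pos s).ne'
          field_simp
  have bound3 : ∫⁻ y in Ioc (2*x) 1,
      ENNReal.ofReal (y ^ (-s)) / ENNReal.ofReal (|x - y| ^ (1-α))
        ≤ ENNReal.ofReal (2^(1-α)*2^(α-s)/(s-α)) * ENNReal.ofReal (x ^ (α-s)) := by
    have hb3 : ∀ y ∈ Ioc (2*x) 1,
        ENNReal.ofReal (y ^ (-s)) / ENNReal.ofReal (|x - y| ^ (1-α))
          ≤ ENNReal.ofReal (2^(1-α)) * ENNReal.ofReal (y ^ (α-1-s)) := by
      intro y hy
      have hy2x : 2*x < y := hy.1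
      have hy0 : (0:ℝ) < y := by linarith
      have hy20 : (0:ℝ) < y/2 := by linarith
      have hxy : y/2 ≤ y - x := by linarith
      have habs : |x - y| = y - x := by
        rw [abs_sub_comm, abs_of_pos (by linarith)]
      have hden : (ENNReal.ofReal (|x - y| ^ (1-α)))⁻¹
          ≤ ENNReal.ofReal ((y/2) ^ (α-1)) := by
        have h1 : (y/2) ^ (1-α) ≤ |x - y| ^ (1-α) := by
          rw [habs]
          exact Real.rpow_le_rpow hy20.le hxy (by linarith)
        calc (ENNReal.ofReal (|x - y| ^ (1-α)))⁻¹
            ≤ (ENNReal.ofReal ((y/2)^(1-α)))⁻¹ :=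
              ENNReal.inv_le_inv' (ENNReal.ofReal_le_ofReal h1)
          _ = ENNReal.ofReal (((y/2)^(1-α))⁻¹) :=
              (ENNReal.ofReal_inv_of_pos (Real.rpow_pos_of_pos hy20 _)).symm
          _ = ENNReal.ofReal ((y/2)^(α-1)) := by
              rw [← Real.rpow_neg hy20.le]
              norm_num
      calc ENNReal.ofReal (y ^ (-s)) / ENNReal.ofReal (|x - y| ^ (1-α))
          ≤ ENNReal.ofReal (y ^ (-s)) * ENNReal.ofReal ((y/2) ^ (α-1)) := by
            rw [div_eq_mul_inv]
            exact mul_le_mul_right hden _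
        _ = ENNReal.ofReal (2^(1-α)) * ENNReal.ofReal (y ^ (α-1-s)) := by
            rw [← ENNReal.ofReal_mul (by positivity), ← ENNReal.ofReal_mul (by positivity)]
            congr 1
            rw [Real.div_rpow hy0.le two_pos.le,
              (by congr 1; ring : (2:ℝ)^(1-α) = 2^(-(α-1))), Real.rpow_neg two_pos.le,
              (by congr 1; ring : y^(α-1-s) = y^(-s+(α-1))), Real.rpow_add hy0]
            field_simp
    calc ∫⁻ y in Ioc (2*x) 1,
        ENNReal.ofReal (y ^ (-s)) / ENNReal.ofReal (|x - y| ^ (1-α))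
        ≤ ∫⁻ y in Ioc (2*x) 1, ENNReal.ofReal (2^(1-α)) * ENNReal.ofReal (y ^ (α-1-s)) :=
          lintegral_mono_ae ((ae_restrict_iff' measurableSet_Ioc).mpr (ae_of_all _ hb3))
      _ = ENNReal.ofReal (2^(1-α)) * ∫⁻ y in Ioc (2*x) 1, ENNReal.ofReal (y ^ (α-1-s)) :=
          lintegral_const_mul' _ _ ENNReal.ofReal_ne_top
      _ ≤ ENNReal.ofReal (2^(1-α)) * ENNReal.ofReal ((2*x) ^ (α-1-s+1) / (-(α-1-s+1))) :=
          mul_le_mul_right (lintegral_rpow_Ioc_le (by positivity) (by linarith : α-1-s < -1)) _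
      _ = ENNReal.ofReal (2^(1-α)*2^(α-s)/(s-α)) * ENNReal.ofReal (x ^ (α-s)) := by
          have e1 : α - 1 - s + 1 = α - s := by ring
          rw [e1]
          rw [← ENNReal.ofReal_mul (h2pos _).le,
            ← ENNReal.ofReal_mul (div_nonneg (by positivity) (by linarith))]
          congr 1
          have e2 : -(α - s) = s - α := by ring
          rw [e2, Real.mul_rpow two_pos.le hx.le]
          have := (sub_pos.mpr hαs).ne'
          field_simp
  calc (∫⁻ y in Icc (0:ℝ) (x/2),
          ENNReal.ofReal (y ^ (-s)) / ENNReal.ofReal (|x - y| ^ (1-α)))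
        + (∫⁻ y in Ioc (x/2) (2*x),
          ENNReal.ofReal (y ^ (-s)) / ENNReal.ofReal (|x - y| ^ (1-α)))
        + ∫⁻ y in Ioc (2*x) 1,
          ENNReal.ofReal (y ^ (-s)) / ENNReal.ofReal (|x - y| ^ (1-α))
      ≤ ENNReal.ofReal (2^(s-α)/(1-s)) * ENNReal.ofReal (x ^ (α-s))
        + ENNReal.ofReal (2*2^s/α) * ENNReal.ofReal (x ^ (α-s))
        + ENNReal.ofReal (2^(1-α)*2^(α-s)/(s-α)) * ENNReal.ofReal (x ^ (α-s)) :=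
        add_le_add (add_le_add bound1 bound2) bound3
    _ = ENNReal.ofReal (2^(s-α)/(1-s) + 2*2^s/α + 2^(1-α)*2^(α-s)/(s-α))
          * ENNReal.ofReal (x ^ (α-s)) := by
        rw [ENNReal.ofReal_add
            (add_nonneg (div_nonneg (h2pos _).le (by linarith))
              (div_nonneg (by positivity) hα.le))
            (div_nonneg (by positivity) (by linarith)),
          ENNReal.ofReal_add
            (div_nonneg (h2pos _).le (by linarith))
            (div_nonneg (by positivity) hα.le), add_mul, add_mul]


lemma grand_le {r C : ℝ} (hr : 1 < r) (hC : 0 ≤ C) {g : ℝ → ℝ≥0∞}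
    (hg : ∀ᵐ x ∂(volume.restrict (Icc (0:ℝ) 1)),
      g x ≤ ENNReal.ofReal C * ENNReal.ofReal (x ^ (-(1/r)))) :
    grandNormE r g ≤ ENNReal.ofReal C * ENNReal.ofReal r := by
  refine iSup₂_le fun ε hε => ?_
  obtain ⟨hε0, hεr⟩ := hε
  have hrε1 : 1 < r - ε := by linarith
  have hr0 : (0:ℝ) < r := by linarith
  have hE : -(1/r) * (r - ε) + 1 = ε / r := by
    field_simp
    ring
  have hE1 : (-1:ℝ) < -(1/r) * (r - ε) := by
    have : (0:ℝ) < ε / r := by positivity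
    linarith
  have key : ∫⁻ t in Icc (0:ℝ) 1, g t ^ (r - ε)
      ≤ ENNReal.ofReal C ^ (r - ε) * ENNReal.ofReal (r / ε) := by
    calc ∫⁻ t in Icc (0:ℝ) 1, g t ^ (r - ε)
        ≤ ∫⁻ t in Icc (0:ℝ) 1,
            ENNReal.ofReal C ^ (r - ε) * ENNReal.ofReal (t ^ (-(1/r) * (r - ε))) := by
          refine lintegral_mono_ae ?_
          filter_upwards [hg, ae_restrict_mem measurableSet_Icc] with t ht hmem
          calc g t ^ (r - ε)
              ≤ (ENNReal.ofReal C * ENNReal.ofReal (t ^ (-(1/r)))) ^ (r - ε) :=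
                ENNReal.rpow_le_rpow ht (by linarith)
            _ = ENNReal.ofReal C ^ (r - ε) * ENNReal.ofReal (t ^ (-(1/r) * (r - ε))) := by
                rw [ENNReal.mul_rpow_of_nonneg _ _ (by linarith : (0:ℝ) ≤ r - ε),
                  ENNReal.ofReal_rpow_of_nonneg (Real.rpow_nonneg hmem.1 _) (by linarith),
                  ← Real.rpow_mul hmem.1]
      _ = ENNReal.ofReal C ^ (r - ε)
            * ∫⁻ t in Icc (0:ℝ) 1, ENNReal.ofReal (t ^ (-(1/r) * (r - ε))) :=
          lintegral_const_mul' _ _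
            (ENNReal.rpow_ne_top_of_nonneg (by linarith) ENNReal.ofReal_ne_top)
      _ = ENNReal.ofReal C ^ (r - ε) * ENNReal.ofReal (r / ε) := by
          rw [lintegral_rpow_Icc_one hE1, hE, one_div_div]
  calc (ENNReal.ofReal ε * ∫⁻ t in Icc (0:ℝ) 1, g t ^ (r - ε)) ^ (1 / (r - ε))
      ≤ (ENNReal.ofReal ε * (ENNReal.ofReal C ^ (r - ε) * ENNReal.ofReal (r / ε)))
          ^ (1 / (r - ε)) :=
        ENNReal.rpow_le_rpow (mul_le_mul_right key _) (by positivity)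
    _ = (ENNReal.ofReal C ^ (r - ε) * ENNReal.ofReal r) ^ (1 / (r - ε)) := by
        congr 1
        have e : ENNReal.ofReal ε * (ENNReal.ofReal C ^ (r - ε) * ENNReal.ofReal (r / ε))
            = ENNReal.ofReal C ^ (r - ε) * (ENNReal.ofReal ε * ENNReal.ofReal (r / ε)) := by
          ring
        rw [e, ← ENNReal.ofReal_mul hε0.le]
        congr 2
        field_simp
    _ = ENNReal.ofReal C * ENNReal.ofReal r ^ (1 / (r - ε)) := by
        rw [ENNReal.mul_rpow_of_nonneg _ _ (by positivity : (0:ℝ) ≤ 1/(r-ε)),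
          ← ENNReal.rpow_mul, mul_one_div_cancel (by linarith : r - ε ≠ 0),
          ENNReal.rpow_one]
    _ ≤ ENNReal.ofReal C * ENNReal.ofReal r := by
        refine mul_le_mul_right ?_ _
        calc ENNReal.ofReal r ^ (1 / (r - ε))
            ≤ ENNReal.ofReal r ^ (1:ℝ) :=
              ENNReal.rpow_le_rpow_of_exponent_le (ENNReal.one_le_ofReal.mpr hr.le)
                (by rw [div_le_one (by linarith)]; linarith)
          _ = ENNReal.ofReal r := ENNReal.rpow_one _

lemma ae_ne_restrict (x : ℝ) (A : Set ℝ) :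
    ∀ᵐ y ∂(volume.restrict A), y ≠ x := by
  refine Filter.Eventually.filter_mono (ae_mono Measure.restrict_le_self) ?_
  have h : {y : ℝ | ¬ y ≠ x} = {x} := by ext y; simp
  rw [ae_iff, h]
  exact measure_singleton x

end GLaux


/-- **Remark 5.1.** Let `0<α<1`, `1<p<1/α`, `q=p/(1-αp)`. The function `f(t)=t^{-1/p}`
belongs to `L^{p)}([0,1]) \ L^p([0,1])` and `I_α f` belongs to `L^{q)}([0,1]) \ L^q([0,1])`.
In particular, there is `f ∈ L^{p)} \ L^p` with `I_α f ∈ L^{q)} \ L^q`. -/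
theorem riesz_of_power_in_grand_not_lebesgue (α p q : ℝ)
    (hα0 : 0 < α) (hα1 : α < 1) (hp : 1 < p) (hpα : p < 1 / α)
    (hq : q = p / (1 - α * p)) :
    (grandNorm p (fun t => t ^ (-(1 / p))) < ⊤ ∧
      (∫⁻ t in Set.Icc (0 : ℝ) 1, ENNReal.ofReal (|t ^ (-(1 / p))| ^ p)) = ⊤ ∧
      grandNormE q (rieszPotential α (fun t => t ^ (-(1 / p)))) < ⊤ ∧
      (∫⁻ x in Set.Icc (0 : ℝ) 1, rieszPotential α (fun t => t ^ (-(1 / p))) x ^ q) = ⊤) ∧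
    ∃ f : ℝ → ℝ, Measurable f ∧ (∀ x, 0 ≤ f x) ∧
      grandNorm p f < ⊤ ∧
      (∫⁻ t in Set.Icc (0 : ℝ) 1, ENNReal.ofReal (|f t| ^ p)) = ⊤ ∧
      grandNormE q (rieszPotential α f) < ⊤ ∧
      (∫⁻ x in Set.Icc (0 : ℝ) 1, rieszPotential α f x ^ q) = ⊤ := by
  have hp0 : (0:ℝ) < p := by linarith
  have hαp : α * p < 1 := by
    rw [lt_div_iff₀ hα0] at hpα
    linarith [hpα]
  have hs0 : (0:ℝ) < 1/p := by positivity
  have hs1 : 1/p < 1 := by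
    rw [div_lt_one hp0]
    exact hp
  have hαs : α < 1/p := by
    rw [lt_div_iff₀ hp0]
    linarith [mul_comm α p]
  have h1αp : (0:ℝ) < 1 - α * p := by linarith
  have hq1 : 1 < q := by
    rw [hq, lt_div_iff₀ h1αp]
    nlinarith
  have hq0 : (0:ℝ) < q := by linarith
  have hiq : 1/q = 1/p - α := by
    rw [hq, one_div_div, sub_div, mul_div_assoc, div_self (ne_of_gt hp0)]
    ring
  have hexp : α - 1/p = -(1/q) := by
    rw [hiq]
    ring
  -- the four main claims for f(t) = t^{-1/p}
  have claim1 : grandNorm p (fun t => t ^ (-(1 / p))) < ⊤ := by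
    have := GLaux.grand_le (C := 1) hp zero_le_one (g := fun t => ENNReal.ofReal |t ^ (-(1/p))|)
      (by
        filter_upwards [ae_restrict_mem measurableSet_Icc] with t ht
        rw [abs_of_nonneg (Real.rpow_nonneg ht.1 _), ENNReal.ofReal_one, one_mul])
    refine lt_of_le_of_lt this ?_
    exact ENNReal.mul_lt_top ENNReal.ofReal_lt_top ENNReal.ofReal_lt_top
  have claim2 : (∫⁻ t in Set.Icc (0 : ℝ) 1, ENNReal.ofReal (|t ^ (-(1 / p))| ^ p)) = ⊤ := by
    have hcongr : ∀ t ∈ Icc (0:ℝ) 1,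
        ENNReal.ofReal (|t ^ (-(1/p))| ^ p) = ENNReal.ofReal (t ^ (-1:ℝ)) := by
      intro t ht
      congr 1
      rw [abs_of_nonneg (Real.rpow_nonneg ht.1 _), ← Real.rpow_mul ht.1]
      congr 1
      field_simp
    rw [setLIntegral_congr_fun measurableSet_Icc hcongr]
    exact GLaux.lintegral_rpow_top le_rfl
  have claim3 : grandNormE q (rieszPotential α (fun t => t ^ (-(1 / p)))) < ⊤ := by
    set K : ℝ := 2^((1/p)-α)/(1-(1/p)) + 2*2^(1/p)/α + 2^(1-α)*2^(α-(1/p))/((1/p)-α) with hK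
    have hKnn : 0 ≤ K := by
      have h2pos : ∀ c : ℝ, (0:ℝ) < 2 ^ c := fun c => Real.rpow_pos_of_pos two_pos c
      have : (0:ℝ) < 1 - 1/p := by linarith
      have : (0:ℝ) < 1/p - α := by linarith
      positivity
    have hb : ∀ᵐ x ∂(volume.restrict (Icc (0:ℝ) 1)),
        rieszPotential α (fun t => t ^ (-(1/p))) x
          ≤ ENNReal.ofReal K * ENNReal.ofReal (x ^ (-(1/q))) := by
      filter_upwards [ae_restrict_mem measurableSet_Icc, GLaux.ae_ne_restrict 0 _]
        with x hx hx0
      have hx' : 0 < x := lt_of_le_of_ne hx.1 (Ne.symm hx0)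
      rw [← hexp]
      exact GLaux.riesz_upper hα0 hαs hs1 hx' hx.2
    have := GLaux.grand_le hq1 hKnn hb
    refine lt_of_le_of_lt this ?_
    exact ENNReal.mul_lt_top ENNReal.ofReal_lt_top ENNReal.ofReal_lt_top
  have claim4 : (∫⁻ x in Set.Icc (0 : ℝ) 1,
      rieszPotential α (fun t => t ^ (-(1 / p))) x ^ q) = ⊤ := by
    refine top_unique ?_
    calc (⊤:ℝ≥0∞) = ∫⁻ x in Icc (0:ℝ) 1, ENNReal.ofReal (x ^ (-1:ℝ)) :=
          (GLaux.lintegral_rpow_top le_rfl).symm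
      _ ≤ ∫⁻ x in Icc (0:ℝ) 1, rieszPotential α (fun t => t ^ (-(1/p))) x ^ q := by
          refine lintegral_mono_ae ?_
          filter_upwards [ae_restrict_mem measurableSet_Icc, GLaux.ae_ne_restrict 0 _]
            with x hx hx0
          have hx' : 0 < x := lt_of_le_of_ne hx.1 (Ne.symm hx0)
          have hlow := GLaux.riesz_lower hα1 hs0 hx' hx.2
          calc ENNReal.ofReal (x ^ (-1:ℝ))
              = ENNReal.ofReal (x ^ (α - 1/p)) ^ q := by
                rw [ENNReal.ofReal_rpow_of_nonneg (Real.rpow_nonneg hx.1 _) hq0.le,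
                  ← Real.rpow_mul hx.1]
                congr 2
                rw [hexp]
                field_simp
            _ ≤ rieszPotential α (fun t => t ^ (-(1/p))) x ^ q :=
                ENNReal.rpow_le_rpow hlow hq0.le
  refine ⟨⟨claim1, claim2, claim3, claim4⟩, ?_⟩
  have hRP : rieszPotential α (fun t => abs t ^ (-(1/p)))
      = rieszPotential α (fun t => t ^ (-(1/p))) := by
    funext x
    unfold rieszPotential
    refine setLIntegral_congr_fun measurableSet_Icc (fun y hy => ?_)
    simp only [abs_of_nonneg hy.1]
  refine ⟨fun t => abs t ^ (-(1/p)), ?_, fun t => Real.rpow_nonneg (abs_nonneg t) _,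
    ?_, ?_, ?_, ?_⟩
  · refine measurable_of_continuousOn_compl_singleton (0:ℝ) ?_
    exact continuousOn_of_forall_continuousAt fun x hx =>
      ContinuousAt.rpow_const continuous_abs.continuousAt (Or.inl (abs_ne_zero.mpr hx))
  · unfold grandNorm
    refine lt_of_le_of_lt (GLaux.grand_le (C := 1) hp zero_le_one ?_)
      (ENNReal.mul_lt_top ENNReal.ofReal_lt_top ENNReal.ofReal_lt_top)
    filter_upwards [ae_restrict_mem measurableSet_Icc] with t ht
    simp only [abs_of_nonneg ht.1, abs_of_nonneg (Real.rpow_nonneg ht.1 (-(1/p))),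
      ENNReal.ofReal_one, one_mul, le_refl]
  · have e : ∫⁻ t in Icc (0:ℝ) 1, ENNReal.ofReal (|abs t ^ (-(1/p))| ^ p)
        = ∫⁻ t in Icc (0:ℝ) 1, ENNReal.ofReal (|t ^ (-(1/p))| ^ p) :=
      setLIntegral_congr_fun measurableSet_Icc
        (fun t ht => by simp only [abs_of_nonneg ht.1])
    show (∫⁻ t in Icc (0:ℝ) 1, ENNReal.ofReal (|abs t ^ (-(1/p))| ^ p)) = ⊤
    rw [e]
    exact claim2
  · rw [hRP]
    exact claim3
  · rw [hRP]
    exact claim4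
end
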